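/- arXiv:1412.6540 — 9 statements merged into one kernel-verified Lean document; each statement's English description precedes it below -/
import Mathlib

section
/- Let γ ≥ 1 and α > 0. Then for all σ ≥ 0: (1 - σ²/(σ² + α)) ≤ (1 - σ^{2γ}/(σ² + α)^γ) ≤ γ(1 - σ²/(σ² + α)). If instead 1/2 ≤ γ ≤ 1, then γ(1 - σ²/(σ² + α)) ≤ (1 - σ^{2γ}/(σ² + α)^γ) ≤ (1 - σ²/(σ² + α)). -/
private lemma key (γ α σ : ℝ) (hα : 0 < α) (hσ : 0 ≤ σ) :
    σ ^ (2 * γ) / (σ ^ 2 + α) ^ γ = (σ ^ 2 / (σ ^ 2 + α)) ^ γ := by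
  have hd : (0:ℝ) < σ ^ 2 + α := by positivity
  rw [Real.div_rpow (by positivity) hd.le, Real.rpow_mul hσ]
  norm_num [Real.rpow_natCast]

theorem stmt7 (γ α : ℝ) (hα : 0 < α) :
    (1 ≤ γ → ∀ σ : ℝ, 0 ≤ σ →
      (1 - σ ^ 2 / (σ ^ 2 + α)) ≤ (1 - σ ^ (2 * γ) / (σ ^ 2 + α) ^ γ) ∧
      (1 - σ ^ (2 * γ) / (σ ^ 2 + α) ^ γ) ≤ γ * (1 - σ ^ 2 / (σ ^ 2 + α))) ∧
    (1 / 2 ≤ γ → γ ≤ 1 → ∀ σ : ℝ, 0 ≤ σ →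
      γ * (1 - σ ^ 2 / (σ ^ 2 + α)) ≤ (1 - σ ^ (2 * γ) / (σ ^ 2 + α) ^ γ) ∧
      (1 - σ ^ (2 * γ) / (σ ^ 2 + α) ^ γ) ≤ (1 - σ ^ 2 / (σ ^ 2 + α))) := by
  constructor
  · intro hγ σ hσ
    have hd : (0:ℝ) < σ ^ 2 + α := by positivity
    set t : ℝ := σ ^ 2 / (σ ^ 2 + α) with ht
    have ht0 : 0 ≤ t := by positivity
    have ht1 : t ≤ 1 := by
      rw [ht, div_le_one hd]; linarith
    rw [key γ α σ hα hσ]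
    constructor
    · have : t ^ γ ≤ t := by
        rcases eq_or_lt_of_le ht0 with h | h
        · rw [← h, Real.zero_rpow (by linarith)]
        · calc t ^ γ ≤ t ^ (1:ℝ) :=
                Real.rpow_le_rpow_of_exponent_ge h ht1 hγ
            _ = t := Real.rpow_one t
      linarith
    · have hb : 1 + γ * (t - 1) ≤ (1 + (t - 1)) ^ γ :=
        one_add_mul_self_le_rpow_one_add (by linarith) hγ
      have : (1 + (t - 1)) = t := by ring
      rw [this] at hb
      nlinarith
  · intro hγ hγ1 σ hσ
    have hd : (0:ℝ) < σ ^ 2 + α := by positivity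
    set t : ℝ := σ ^ 2 / (σ ^ 2 + α) with ht
    have ht0 : 0 ≤ t := by positivity
    have ht1 : t ≤ 1 := by
      rw [ht, div_le_one hd]; linarith
    rw [key γ α σ hα hσ]
    constructor
    · have hb : (1 + (t - 1)) ^ γ ≤ 1 + γ * (t - 1) :=
        rpow_one_add_le_one_add_mul_self (by linarith) (by linarith) hγ1
      have : (1 + (t - 1)) = t := by ring
      rw [this] at hb
      nlinarith
    · have : t ≤ t ^ γ := by
        rcases eq_or_lt_of_le ht0 with h | h
        · rcases eq_or_lt_of_le hγ1 with rfl | h1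
          · rw [Real.rpow_one]
          · rw [← h, Real.zero_rpow (by linarith)]
        · calc t = t ^ (1:ℝ) := (Real.rpow_one t).symm
            _ ≤ t ^ γ := Real.rpow_le_rpow_of_exponent_ge h ht1 hγ1
      linarith
end

section
/- For every γ ≥ 1/2, σ₁ > 0 and 0 < ν ≤ 2, there exists c > 0 such that for all α > 0, sup_{0 ≤ σ ≤ σ₁} (1 - σ^{2γ}/(σ² + α)^γ) σ^ν ≤ c · α^{ν/2}. -/
theorem stmt8 (γ σ₁ ν : ℝ) (hγ : 1 / 2 ≤ γ) (hσ₁ : 0 < σ₁)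
    (hν : 0 < ν) (hν2 : ν ≤ 2) :
    ∃ c > (0:ℝ), ∀ α > (0:ℝ), ∀ σ : ℝ, 0 ≤ σ → σ ≤ σ₁ →
      (1 - σ ^ (2 * γ) / (σ ^ 2 + α) ^ γ) * σ ^ ν ≤ c * α ^ (ν / 2) := by
  refine ⟨γ + 1, by linarith, ?_⟩
  intro α hα σ hσ hσ1
  have hαν : 0 < α ^ (ν / 2) := Real.rpow_pos_of_pos hα _
  rcases eq_or_lt_of_le hσ with h0 | h0
  · -- σ = 0
    rw [← h0]
    rw [Real.zero_rpow (by linarith : 2 * γ ≠ 0), Real.zero_rpow hν.ne']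
    rw [zero_div, mul_zero]
    positivity
  · -- σ > 0
    have hden : 0 < σ ^ 2 + α := by positivity
    set x : ℝ := σ ^ 2 / (σ ^ 2 + α) with hxdef
    have hx0 : 0 < x := by positivity
    have hx1 : x ≤ 1 := by
      rw [hxdef, div_le_one hden]; linarith
    have hrw : σ ^ (2 * γ) / (σ ^ 2 + α) ^ γ = x ^ γ := by
      rw [hxdef, Real.div_rpow (by positivity) hden.le]
      congr 1
      rw [← Real.rpow_natCast σ 2, ← Real.rpow_mul hσ]
      norm_num
    rw [hrw]
    -- key: 1 - x^γ ≤ (γ+1)(1-x)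
    have key : 1 - x ^ γ ≤ (γ + 1) * (1 - x) := by
      rcases le_or_gt 1 γ with hγ1 | hγ1
      · have hb := one_add_mul_self_le_rpow_one_add
          (by linarith : (-1:ℝ) ≤ x - 1) hγ1
        have : (1 + (x - 1)) = x := by ring
        rw [this] at hb
        nlinarith [hx1, hx0]
      · have : x ^ (1:ℝ) ≤ x ^ γ :=
          Real.rpow_le_rpow_of_exponent_ge hx0 hx1 hγ1.le
        rw [Real.rpow_one] at this
        nlinarith [hx1]
    have hσν : 0 ≤ σ ^ ν := Real.rpow_nonneg hσ _
    have step1 : (1 - x ^ γ) * σ ^ ν ≤ (γ + 1) * (1 - x) * σ ^ ν := by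
      apply mul_le_mul_of_nonneg_right key hσν
    have h1x : 1 - x = α / (σ ^ 2 + α) := by
      rw [hxdef, eq_div_iff hden.ne', sub_mul, one_mul, div_mul_cancel₀ _ hden.ne']
      ring
    -- show α * σ^ν ≤ α^(ν/2) * (σ² + α)
    have core : α * σ ^ ν ≤ α ^ (ν / 2) * (σ ^ 2 + α) := by
      have hσν2 : σ ^ ν = (σ ^ 2) ^ (ν / 2) := by
        rw [← Real.rpow_natCast σ 2, ← Real.rpow_mul hσ]
        norm_num
        congr 1
        ring
      rcases le_total (σ ^ 2) α with hc | hc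
      · have : (σ ^ 2) ^ (ν / 2) ≤ α ^ (ν / 2) :=
          Real.rpow_le_rpow (by positivity) hc (by linarith)
        have h2 : α * σ ^ ν ≤ α ^ (ν / 2) * α := by
          rw [hσν2, mul_comm]
          exact mul_le_mul_of_nonneg_right this hα.le
        nlinarith [hαν]
      · have hα2 : α ^ (1 - ν / 2) ≤ (σ ^ 2) ^ (1 - ν / 2) :=
          Real.rpow_le_rpow hα.le hc (by linarith)
        have hsplit : α = α ^ (ν / 2) * α ^ (1 - ν / 2) := by
          rw [← Real.rpow_add hα]; norm_num
        have hsplit2 : (σ ^ 2 : ℝ) = (σ ^ 2) ^ (ν / 2) * (σ ^ 2) ^ (1 - ν / 2) := by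
          rw [← Real.rpow_add (by positivity),
            show ν / 2 + (1 - ν / 2) = (1:ℝ) by ring, Real.rpow_one]
        have h2 : α * σ ^ ν ≤ α ^ (ν / 2) * σ ^ 2 := by
          rw [hσν2]
          calc α * (σ ^ 2) ^ (ν / 2)
              = α ^ (ν / 2) * ((σ ^ 2) ^ (ν / 2) * α ^ (1 - ν / 2)) := by
                rw [show α ^ (ν / 2) * ((σ ^ 2) ^ (ν / 2) * α ^ (1 - ν / 2))
                    = α ^ (ν / 2) * α ^ (1 - ν / 2) * (σ ^ 2) ^ (ν / 2) from by ring,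
                  ← hsplit]
            _ ≤ α ^ (ν / 2) * ((σ ^ 2) ^ (ν / 2) * (σ ^ 2) ^ (1 - ν / 2)) := by
                apply mul_le_mul_of_nonneg_left _ hαν.le
                exact mul_le_mul_of_nonneg_left hα2 (by positivity)
            _ = α ^ (ν / 2) * σ ^ 2 := by rw [← hsplit2]
        have : 0 ≤ α ^ (ν / 2) * α := by positivity
        linarith
    calc (1 - x ^ γ) * σ ^ ν ≤ (γ + 1) * (1 - x) * σ ^ ν := step1
      _ = (γ + 1) * (α * σ ^ ν / (σ ^ 2 + α)) := by rw [h1x]; ring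
      _ ≤ (γ + 1) * α ^ (ν / 2) := by
          apply mul_le_mul_of_nonneg_left _ (by linarith)
          rw [div_le_iff₀ hden]
          linarith [core]
end

section
/- For every γ ≥ 1/2 and every α with 0 < α ≤ σ₁², it holds that for all σ ∈ [√α, σ₁]: (1 - σ^{2γ}/(σ² + α)^γ) σ² ≥ min{1, γ} · α/2. -/
theorem stmt9 (γ σ₁ α : ℝ) (hγ : 1 / 2 ≤ γ) (hα : 0 < α) (hασ : α ≤ σ₁ ^ 2) :
    ∀ σ : ℝ, Real.sqrt α ≤ σ → σ ≤ σ₁ →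
      (1 - σ ^ (2 * γ) / (σ ^ 2 + α) ^ γ) * σ ^ 2 ≥ min 1 γ * (α / 2) := by
  intro σ hσl hσu
  have hγ0 : 0 ≤ γ := le_trans (by norm_num) hγ
  have hσ0 : 0 < σ := lt_of_lt_of_le (Real.sqrt_pos.mpr hα) hσl
  have hσ2 : α ≤ σ ^ 2 := by
    have := Real.sqrt_le_sqrt (Real.sq_sqrt hα.le ▸ le_refl α)
    nlinarith [Real.sq_sqrt hα.le, Real.sqrt_nonneg α]
  have hd : 0 < σ ^ 2 + α := by positivity
  set t : ℝ := σ ^ 2 / (σ ^ 2 + α) with ht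
  have ht0 : 0 < t := by positivity
  have ht1 : t ≤ 1 := by
    rw [ht, div_le_one hd]; linarith
  have hrw : σ ^ (2 * γ) / (σ ^ 2 + α) ^ γ = t ^ γ := by
    rw [ht, Real.div_rpow (by positivity) hd.le]
    congr 1
    rw [← Real.rpow_natCast σ 2, ← Real.rpow_mul hσ0.le]
    norm_num
  rw [hrw]
  set m : ℝ := min 1 γ with hm
  have hm0 : 0 ≤ m := le_min (by norm_num) hγ0
  -- Step 1: 1 - t^γ ≥ m * (1 - t)
  have key : m * (1 - t) ≤ 1 - t ^ γ := by
    rcases le_total 1 γ with h1 | h1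
    · have : t ^ γ ≤ t := by
        calc t ^ γ ≤ t ^ (1:ℝ) := Real.rpow_le_rpow_of_exponent_ge ht0 ht1 h1
        _ = t := Real.rpow_one t
      have hmm : m = 1 := min_eq_left h1
      rw [hmm]; linarith
    · have hb := rpow_one_add_le_one_add_mul_self (s := t - 1) (by linarith) hγ0 h1
      have hmm : m = γ := min_eq_right h1
      rw [hmm]
      have : (1 + (t - 1)) = t := by ring
      rw [this] at hb
      linarith
  -- Step 2: (1 - t) * σ^2 ≥ α / 2
  have step2 : α / 2 ≤ (1 - t) * σ ^ 2 := by
    have : (1 - t) = α / (σ ^ 2 + α) := by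
      rw [ht]; field_simp; ring
    rw [this, div_mul_eq_mul_div, ge_iff_le.symm, ge_iff_le, div_le_div_iff₀ (by norm_num) hd]
    nlinarith
  have hσ2pos : (0:ℝ) ≤ σ ^ 2 := by positivity
  calc m * (α / 2) ≤ m * ((1 - t) * σ ^ 2) := by
        exact mul_le_mul_of_nonneg_left step2 hm0
    _ = (m * (1 - t)) * σ ^ 2 := by ring
    _ ≤ (1 - t ^ γ) * σ ^ 2 := mul_le_mul_of_nonneg_right key hσ2pos
end

section
/- Let n ≥ 1, r > 0, 0 < ν ≤ n(r+1) and σ₁ > 0. Then there exists c > 0 such that for all α > 0, sup_{0 ≤ σ ≤ σ₁} [α^n σ^ν / (σ^{r+1} + α)^n] ≤ c · α^{ν/(r+1)}. Moreover, if ν = n(r+1) and β = 1/(r+1), then α^n σ^ν/(σ^{r+1}+α)^n ≥ α^n / 2^n for all σ ∈ [α^β, σ₁] (assuming α^β ≤ σ₁). -/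
theorem stmt11 (n : ℕ) (hn : 1 ≤ n) (r ν σ₁ : ℝ) (hr : 0 < r) (hν : 0 < ν)
    (hν2 : ν ≤ (n : ℝ) * (r + 1)) (hσ₁ : 0 < σ₁) :
    (∃ c > (0:ℝ), ∀ α > (0:ℝ), ∀ σ : ℝ, 0 ≤ σ → σ ≤ σ₁ →
      α ^ n * σ ^ ν / (σ ^ (r + 1) + α) ^ n ≤ c * α ^ (ν / (r + 1))) ∧
    (ν = (n : ℝ) * (r + 1) → ∀ α > (0:ℝ), α ^ (1 / (r + 1)) ≤ σ₁ →
      ∀ σ : ℝ, α ^ (1 / (r + 1)) ≤ σ → σ ≤ σ₁ →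
        α ^ n * σ ^ ν / (σ ^ (r + 1) + α) ^ n ≥ α ^ n / 2 ^ n) := by
  have hr1 : (0:ℝ) < r + 1 := by linarith
  constructor
  · refine ⟨1, one_pos, ?_⟩
    intro α hα σ hσ hσ1
    rw [one_mul]
    rcases eq_or_lt_of_le hσ with h0 | h0
    · rw [← h0, Real.zero_rpow (ne_of_gt hν), mul_zero, zero_div]
      positivity
    · set A := σ ^ (r+1) + α with hA
      have hTpos : 0 < σ ^ (r+1) := Real.rpow_pos_of_pos h0 _
      have hAσ : σ ^ (r+1) ≤ A := le_add_of_nonneg_right hα.le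
      have hAα : α ≤ A := le_add_of_nonneg_left hTpos.le
      have hApos : 0 < A := lt_of_lt_of_le hα hAα
      have hθ : 0 ≤ ν / (r+1) := by positivity
      have hθ2 : 0 ≤ (n:ℝ) - ν / (r+1) := by
        rw [sub_nonneg, div_le_iff₀ hr1]
        linarith
      have key : σ ^ ν * α ^ ((n:ℝ) - ν/(r+1)) ≤ A ^ n := by
        have h1 : σ ^ ν ≤ A ^ (ν/(r+1)) := by
          have : (σ ^ (r+1)) ^ (ν/(r+1)) ≤ A ^ (ν/(r+1)) :=
            Real.rpow_le_rpow hTpos.le hAσ hθ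
          rwa [← Real.rpow_mul h0.le, mul_div_cancel₀ _ (ne_of_gt hr1)] at this
        have h2 : α ^ ((n:ℝ) - ν/(r+1)) ≤ A ^ ((n:ℝ) - ν/(r+1)) :=
          Real.rpow_le_rpow hα.le hAα hθ2
        calc σ ^ ν * α ^ ((n:ℝ) - ν/(r+1))
            ≤ A ^ (ν/(r+1)) * A ^ ((n:ℝ) - ν/(r+1)) :=
              mul_le_mul h1 h2 (Real.rpow_nonneg hα.le _) (Real.rpow_nonneg hApos.le _)
          _ = A ^ ((n:ℝ)) := by rw [← Real.rpow_add hApos]; ring_nf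
          _ = A ^ n := Real.rpow_natCast A n
      rw [div_le_iff₀ (pow_pos hApos n)]
      calc α ^ n * σ ^ ν
          = α ^ (ν/(r+1)) * (σ ^ ν * α ^ ((n:ℝ) - ν/(r+1))) := by
            rw [← Real.rpow_natCast α n]
            rw [show α ^ (ν/(r+1)) * (σ ^ ν * α ^ ((n:ℝ) - ν/(r+1)))
                = (α ^ (ν/(r+1)) * α ^ ((n:ℝ) - ν/(r+1))) * σ ^ ν by ring,
              ← Real.rpow_add hα]
            ring_nf
        _ ≤ α ^ (ν/(r+1)) * A ^ n :=
            mul_le_mul_of_nonneg_left key (Real.rpow_nonneg hα.le _)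
  · intro hνeq α hα hαβ σ hσl hσu
    have hσpos : 0 < σ := lt_of_lt_of_le (Real.rpow_pos_of_pos hα _) hσl
    have hT : α ≤ σ ^ (r+1) := by
      have h := Real.rpow_le_rpow (Real.rpow_nonneg hα.le _) hσl hr1.le
      rwa [← Real.rpow_mul hα.le, one_div, inv_mul_cancel₀ (ne_of_gt hr1),
        Real.rpow_one] at h
    have hTpos : 0 < σ ^ (r+1) := Real.rpow_pos_of_pos hσpos _
    have hσν : σ ^ ν = (σ ^ (r+1)) ^ n := by
      rw [hνeq, ← Real.rpow_natCast (σ ^ (r+1)) n, ← Real.rpow_mul hσpos.le]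
      ring_nf
    have hsum : (σ ^ (r+1) + α) ^ n ≤ 2 ^ n * (σ ^ (r+1)) ^ n := by
      rw [← mul_pow]
      exact pow_le_pow_left₀ (by positivity) (by linarith) n
    rw [ge_iff_le, div_le_div_iff₀ (by positivity) (by positivity), hσν]
    calc α ^ n * (σ ^ (r+1) + α) ^ n
        ≤ α ^ n * (2 ^ n * (σ ^ (r+1)) ^ n) :=
          mul_le_mul_of_nonneg_left hsum (by positivity)
      _ = α ^ n * (σ ^ (r+1)) ^ n * 2 ^ n := by ring
end

section
/- Let n ≥ 1, γ ≥ 1/2, and 0 < α ≤ σ₁². Then for all σ ∈ [√α, σ₁]: (1 − σ^{2γ}/(σ² + α)^γ)^n · σ^{2n} ≥ (min{1, γ})^n · (α/2)^n. -/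
theorem stmt13 (n : ℕ) (hn : 1 ≤ n) (γ σ₁ α : ℝ) (hγ : 1 / 2 ≤ γ)
    (hα : 0 < α) (hασ : α ≤ σ₁ ^ 2) :
    ∀ σ : ℝ, Real.sqrt α ≤ σ → σ ≤ σ₁ →
      (1 - σ ^ (2 * γ) / (σ ^ 2 + α) ^ γ) ^ n * σ ^ (2 * n) ≥
        (min 1 γ) ^ n * (α / 2) ^ n := by
  intro σ h1 h2
  have hσ0 : 0 < σ := lt_of_lt_of_le (Real.sqrt_pos.mpr hα) h1
  have hσ2 : α ≤ σ ^ 2 := by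
    nlinarith [Real.sq_sqrt hα.le, Real.sqrt_nonneg α,
      pow_le_pow_left₀ (Real.sqrt_nonneg α) h1 2]
  have hden : 0 < σ ^ 2 + α := by positivity
  set t : ℝ := σ ^ 2 / (σ ^ 2 + α) with ht
  have ht0 : 0 < t := by positivity
  have ht1 : t ≤ 1 := by
    rw [ht, div_le_one hden]; linarith
  -- rewrite the rpow quotient as t ^ γ
  have hrw : σ ^ (2 * γ) / (σ ^ 2 + α) ^ γ = t ^ γ := by
    rw [ht, Real.div_rpow (by positivity) hden.le]
    congr 1
    rw [show σ ^ 2 = σ ^ (2:ℝ) by rw [← Real.rpow_natCast σ 2]; norm_num,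
      ← Real.rpow_mul hσ0.le]
  -- key: 1 - t ^ γ ≥ min 1 γ * (1 - t)
  have hkey : min 1 γ * (1 - t) ≤ 1 - t ^ γ := by
    rcases le_or_gt 1 γ with hγ1 | hγ1
    · rw [min_eq_left hγ1, one_mul]
      have : t ^ γ ≤ t ^ (1:ℝ) := Real.rpow_le_rpow_of_exponent_ge ht0 ht1 hγ1
      rw [Real.rpow_one] at this; linarith
    · rw [min_eq_right hγ1.le]
      have hb : (1 + (t - 1)) ^ γ ≤ 1 + γ * (t - 1) :=
        rpow_one_add_le_one_add_mul_self (by linarith) (by linarith) hγ1.le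
      have : (1 + (t - 1)) = t := by ring
      rw [this] at hb
      nlinarith
  have hfrac : 1 - t = α / (σ ^ 2 + α) := by
    rw [ht]; field_simp; ring
  have hmin0 : 0 ≤ min 1 γ := le_min zero_le_one (by linarith)
  -- step: (1 - t^γ) * σ^2 ≥ min 1 γ * (α/2)
  have hstep : min 1 γ * (α / 2) ≤ (1 - t ^ γ) * σ ^ 2 := by
    have h3 : α / 2 ≤ (1 - t) * σ ^ 2 := by
      rw [hfrac, div_mul_eq_mul_div, div_le_div_iff₀ two_pos hden]
      nlinarith
    calc min 1 γ * (α / 2) ≤ min 1 γ * ((1 - t) * σ ^ 2) := by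
          apply mul_le_mul_of_nonneg_left h3 hmin0
      _ = (min 1 γ * (1 - t)) * σ ^ 2 := by ring
      _ ≤ (1 - t ^ γ) * σ ^ 2 := by nlinarith
  have hb0 : 0 ≤ min 1 γ * (α / 2) := by positivity
  have hpow : (min 1 γ * (α / 2)) ^ n ≤ ((1 - t ^ γ) * σ ^ 2) ^ n :=
    pow_le_pow_left₀ hb0 hstep n
  calc (min 1 γ) ^ n * (α / 2) ^ n = (min 1 γ * (α / 2)) ^ n := (mul_pow _ _ _).symm
    _ ≤ ((1 - t ^ γ) * σ ^ 2) ^ n := hpow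
    _ = (1 - t ^ γ) ^ n * σ ^ (2 * n) := by rw [mul_pow, ← pow_mul]
    _ = (1 - σ ^ (2 * γ) / (σ ^ 2 + α) ^ γ) ^ n * σ ^ (2 * n) := by rw [hrw]
end

section
/- Let (α_k) and (r_k) be sequences of positive reals with sup_k r_k = r < ∞. Then for every σ ∈ (0, 1], the series ∑_{k=1}^∞ σ^{r_k+1}/(σ^{r_k+1} + α_k) diverges if and only if ∑_{k=1}^∞ 1/α_k diverges. -/
theorem stmt14 (α rk : ℕ → ℝ) (hα : ∀ k, 0 < α k) (hrk : ∀ k, 0 < rk k)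
    (r : ℝ) (hbdd : BddAbove (Set.range rk)) (hsup : r = ⨆ k, rk k) :
    ∀ σ : ℝ, 0 < σ → σ ≤ 1 →
      (¬ Summable (fun k => σ ^ (rk k + 1) / (σ ^ (rk k + 1) + α k)) ↔
       ¬ Summable (fun k => 1 / α k)) := by
  intro σ hσ0 hσ1
  set s : ℕ → ℝ := fun k => σ ^ (rk k + 1) with hsdef
  set c : ℝ := σ ^ (r + 1) with hcdef
  have hrle : ∀ k, rk k ≤ r := by
    intro k; rw [hsup]; exact le_ciSup hbdd k
  have hc : 0 < c := Real.rpow_pos_of_pos hσ0 _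
  have hs : ∀ k, 0 < s k := fun k => Real.rpow_pos_of_pos hσ0 _
  have h1 : ∀ k, c ≤ s k := fun k =>
    Real.rpow_le_rpow_of_exponent_ge hσ0 hσ1 (by linarith [hrle k])
  have h2 : ∀ k, s k ≤ 1 := fun k =>
    Real.rpow_le_one hσ0.le hσ1 (by linarith [(hrk k).le])
  suffices h : Summable (fun k => s k / (s k + α k)) ↔ Summable (fun k => 1 / α k) by
    exact not_congr h
  constructor
  · intro h
    have hsum : Summable (fun k => c / (c + α k)) := by
      refine Summable.of_nonneg_of_le (fun k => ?_) (fun k => ?_) h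
      · exact div_nonneg hc.le (by linarith [hα k])
      · rw [div_le_div_iff₀ (by linarith [hα k]) (by linarith [hα k, hs k])]
        nlinarith [hα k, h1 k, hs k]
    have hcomp : Summable (fun k => 1 / (c + α k)) := by
      refine (hsum.mul_left (1 / c)).congr fun k => ?_
      have hk : (0:ℝ) < c + α k := by linarith [hα k]
      field_simp
    have htend : Filter.Tendsto (fun k => 1 / (c + α k)) Filter.atTop (nhds 0) :=
      hcomp.tendsto_atTop_zero
    have hev : ∀ᶠ k in Filter.atTop, 1 / (c + α k) < 1 / (2 * c) :=
      htend.eventually_lt_const (by positivity)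
    obtain ⟨N, hN⟩ := hev.exists_forall_of_atTop
    have hαc : ∀ k ≥ N, c ≤ α k := by
      intro k hk
      have hlt := hN k hk
      have hpos : (0:ℝ) < c + α k := by linarith [hα k]
      rw [div_lt_div_iff₀ hpos (by linarith : (0:ℝ) < 2 * c)] at hlt
      linarith
    rw [← summable_nat_add_iff N]
    refine Summable.of_nonneg_of_le (fun k => ?_) (fun k => ?_)
      (((summable_nat_add_iff N).mpr hcomp).mul_left 2)
    · exact div_nonneg zero_le_one (hα _).le
    · have hck : c ≤ α (k + N) := hαc _ (Nat.le_add_left N k)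
      have hpos : (0:ℝ) < c + α (k + N) := by linarith [hα (k + N)]
      rw [mul_one_div, div_le_div_iff₀ (hα _) hpos]
      nlinarith [hα (k + N)]
  · intro h
    refine Summable.of_nonneg_of_le (fun k => ?_) (fun k => ?_) h
    · exact div_nonneg (hs k).le (by linarith [hα k, hs k])
    · rw [div_le_div_iff₀ (by linarith [hα k, hs k]) (hα k)]
      nlinarith [hα k, hs k, h2 k]
end

section
/- Let (α_k) be positive reals, (r_k) a monotone sequence with r_k → ∞, and suppose that for every σ ∈ (0, 1], σ^{r_n+1} · ∑_{k=1}^n 1/α_k → ∞ as n → ∞. Then for every σ ∈ (0, 1], the series ∑_{k=1}^∞ σ^{r_k+1}/(σ^{r_k+1} + α_k) diverges. -/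
open Filter

theorem stmt15 (α rk : ℕ → ℝ) (hα : ∀ k, 0 < α k) (hmono : Monotone rk)
    (hdiv : Tendsto rk atTop atTop)
    (hcond : ∀ σ : ℝ, 0 < σ → σ ≤ 1 →
      Tendsto (fun n => σ ^ (rk n + 1) * ∑ k ∈ Finset.Icc 1 n, 1 / α k)
        atTop atTop) :
    ∀ σ : ℝ, 0 < σ → σ ≤ 1 →
      ¬ Summable (fun k => σ ^ (rk k + 1) / (σ ^ (rk k + 1) + α k)) := by
  intro σ hσ hσ1 hsum
  set x : ℕ → ℝ := fun k => σ ^ (rk k + 1) with hxdef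
  have hxpos : ∀ k, 0 < x k := fun k => Real.rpow_pos_of_pos hσ _
  have hxanti : ∀ {m n : ℕ}, m ≤ n → x n ≤ x m := by
    intro m n h
    exact Real.rpow_le_rpow_of_exponent_ge hσ hσ1 (by linarith [hmono h])
  set f : ℕ → ℝ := fun k => x k / (x k + α k) with hfdef
  have hfnonneg : ∀ k, 0 ≤ f k := fun k =>
    div_nonneg (hxpos k).le (by linarith [hxpos k, hα k])
  have hf0 : Tendsto f atTop (nhds 0) := hsum.tendsto_atTop_zero
  have hsmall : ∀ᶠ k in atTop, f k < 1/2 :=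
    hf0.eventually (Filter.Tendsto.eventually_lt_const (by norm_num) tendsto_id)
  obtain ⟨K, hK⟩ := eventually_atTop.mp hsmall
  -- for k ≥ K, x k < α k, hence x k / α k ≤ 2 * f k
  have hkey : ∀ k, K ≤ k → x k / α k ≤ 2 * f k := by
    intro k hk
    have h2 := hK k hk
    have hd : 0 < x k + α k := by linarith [hxpos k, hα k]
    have hxa : x k < α k := by
      rw [div_lt_iff₀ hd] at h2
      linarith
    rw [hfdef]
    have h2x : 2 * (x k / (x k + α k)) = (2 * x k) / (x k + α k) := by ring
    simp only []
    rw [h2x, div_le_div_iff₀ (hα k) hd]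
    nlinarith [hxpos k]
  set B : ℝ := ∑' k, f k with hBdef
  have hsumle : ∀ n, ∑ k ∈ Finset.Icc 1 n, f k ≤ B :=
    fun n => Summable.sum_le_tsum _ (fun k _ => hfnonneg k) hsum
  set C : ℝ := ∑ k ∈ Finset.Icc 1 K, x 0 / α k with hCdef
  have hbound : ∀ n, K ≤ n →
      x n * ∑ k ∈ Finset.Icc 1 n, 1 / α k ≤ C + 2 * B := by
    intro n hn
    rw [Finset.mul_sum]
    have step : ∀ k ∈ Finset.Icc 1 n,
        x n * (1 / α k) ≤ (if k ≤ K then x 0 / α k else 0) + 2 * f k := by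
      intro k hk
      have hk' := Finset.mem_Icc.mp hk
      by_cases h : k ≤ K
      · simp only [h, if_true]
        have h1 : x n * (1 / α k) ≤ x 0 / α k := by
          rw [mul_one_div]
          exact div_le_div_of_nonneg_right (hxanti (Nat.zero_le n)) (hα k).le
        nlinarith [hfnonneg k]
      · simp only [h, if_false, zero_add]
        push_neg at h
        have h1 : x n * (1 / α k) ≤ x k / α k := by
          rw [mul_one_div]
          exact div_le_div_of_nonneg_right (hxanti hk'.2) (hα k).le
        exact h1.trans (hkey k h.le)
    calc ∑ k ∈ Finset.Icc 1 n, x n * (1 / α k)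
        ≤ ∑ k ∈ Finset.Icc 1 n, ((if k ≤ K then x 0 / α k else 0) + 2 * f k) :=
          Finset.sum_le_sum step
      _ = (∑ k ∈ Finset.Icc 1 n, (if k ≤ K then x 0 / α k else 0))
            + 2 * ∑ k ∈ Finset.Icc 1 n, f k := by
          rw [Finset.sum_add_distrib, Finset.mul_sum]
      _ ≤ C + 2 * B := by
          gcongr ?_ + 2 * ?_
          · have hsub : Finset.Icc 1 K ⊆ Finset.Icc 1 n := by
              apply Finset.Icc_subset_Icc_right hn
            rw [hCdef]
            rw [← Finset.sum_subset hsub]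
            · apply Finset.sum_le_sum
              intro k hk
              split
              · exact le_refl _
              · exact div_nonneg (hxpos 0).le (hα k).le
            · intro k hk hk2
              have : ¬ k ≤ K := by
                intro hle
                exact hk2 (Finset.mem_Icc.mpr ⟨(Finset.mem_Icc.mp hk).1, hle⟩)
              simp [this]
          · exact hsumle n
  -- contradiction with hcond
  have htend := hcond σ hσ hσ1
  have := (htend.eventually_ge_atTop (C + 2*B + 1)).and (eventually_ge_atTop K)
  obtain ⟨n, h1, h2⟩ := this.exists
  have := hbound n h2
  simp only [hxdef] at this
  linarith
end

section
/- Let ν > 0, r ≥ 0, and let (α_k), (r_k) be sequences of positive reals with r_k ≤ r for all k. Then there exists c > 0 (depending only on ν and r) such that for every σ ∈ (0, 1] and every n: σ^ν ∏_{k=1}^n (1 − σ^{r_k+1}/(σ^{r_k+1} + α_k)) ≤ c · (∑_{k=1}^n 1/(1 + α_k))^{−ν/(r+1)}. -/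
open Real Finset

lemma exp_neg_le_aux (μ : ℝ) (hμ : 0 < μ) :
    ∃ C > (0:ℝ), ∀ t : ℝ, 0 < t → Real.exp (-t) ≤ C * t ^ (-μ) := by
  set m := ⌈μ⌉₊ with hm
  refine ⟨(m.factorial : ℝ) + 1, by positivity, fun t ht => ?_⟩
  have htμ : (0:ℝ) < t ^ μ := Real.rpow_pos_of_pos ht μ
  rw [Real.rpow_neg ht.le, ← div_eq_mul_inv, le_div_iff₀ htμ]
  have hfact : (1:ℝ) ≤ (m.factorial : ℝ) := by exact_mod_cast Nat.one_le_iff_ne_zero.mpr m.factorial_ne_zero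
  rcases le_or_gt t 1 with h1 | h1
  · have h2 : t ^ μ ≤ 1 := Real.rpow_le_one ht.le h1 hμ.le
    have h3 : Real.exp (-t) ≤ 1 := Real.exp_le_one_iff.mpr (by linarith)
    nlinarith [Real.exp_pos (-t), htμ]
  · have h2 : t ^ μ ≤ t ^ (m:ℝ) :=
      Real.rpow_le_rpow_of_exponent_le h1.le (Nat.le_ceil μ)
    rw [Real.rpow_natCast] at h2
    have h3 : t ^ m / (m.factorial : ℝ) ≤ Real.exp t := Real.pow_div_factorial_le_exp (x := t) ht.le m
    have h4 : t ^ m ≤ (m.factorial : ℝ) * Real.exp t := by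
      rw [div_le_iff₀ (by positivity)] at h3; linarith [h3]
    have h5 : Real.exp (-t) * t ^ μ ≤ Real.exp (-t) * ((m.factorial : ℝ) * Real.exp t) := by
      exact mul_le_mul_of_nonneg_left (h2.trans h4) (Real.exp_pos _).le
    calc Real.exp (-t) * t ^ μ ≤ Real.exp (-t) * ((m.factorial : ℝ) * Real.exp t) := h5
      _ = (m.factorial : ℝ) := by
          rw [show Real.exp (-t) * ((m.factorial : ℝ) * Real.exp t) =
            (m.factorial : ℝ) * (Real.exp (-t) * Real.exp t) by ring, ← Real.exp_add,
            neg_add_cancel, Real.exp_zero, mul_one]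
      _ ≤ (m.factorial : ℝ) + 1 := by linarith

theorem stmt16 (ν r : ℝ) (hν : 0 < ν) (hr : 0 ≤ r) (α rk : ℕ → ℝ)
    (hα : ∀ k, 0 < α k) (hrk : ∀ k, 0 < rk k) (hrk2 : ∀ k, rk k ≤ r) :
    ∃ c > (0:ℝ), ∀ σ : ℝ, 0 < σ → σ ≤ 1 → ∀ n : ℕ, 1 ≤ n →
      σ ^ ν * ∏ k ∈ Finset.Icc 1 n,
          (1 - σ ^ (rk k + 1) / (σ ^ (rk k + 1) + α k)) ≤
        c * (∑ k ∈ Finset.Icc 1 n, 1 / (1 + α k)) ^ (-(ν / (r + 1))) := by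
  have hr1 : (0:ℝ) < r + 1 := by linarith
  have hμ : 0 < ν / (r + 1) := by positivity
  obtain ⟨C, hC, hCle⟩ := exp_neg_le_aux (ν / (r + 1)) hμ
  refine ⟨C, hC, fun σ hσ hσ1 n hn => ?_⟩
  set S := ∑ k ∈ Finset.Icc 1 n, 1 / (1 + α k) with hS
  have hSpos : 0 < S := by
    apply Finset.sum_pos (fun k _ => by have := hα k; positivity)
    exact ⟨1, Finset.mem_Icc.mpr ⟨le_refl 1, hn⟩⟩
  -- each factor bound
  have hσr1 : 0 < σ ^ (r + 1) := Real.rpow_pos_of_pos hσ _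
  have hprod : ∏ k ∈ Finset.Icc 1 n, (1 - σ ^ (rk k + 1) / (σ ^ (rk k + 1) + α k)) ≤
      ∏ k ∈ Finset.Icc 1 n, Real.exp (-(σ ^ (r + 1) * (1 / (1 + α k)))) := by
    apply Finset.prod_le_prod
    · intro k _
      have ha := hα k
      have h1 : 0 < σ ^ (rk k + 1) := Real.rpow_pos_of_pos hσ _
      have h2 : σ ^ (rk k + 1) / (σ ^ (rk k + 1) + α k) ≤ 1 := by
        rw [div_le_one (by linarith)]; linarith
      linarith
    · intro k _
      have ha := hα k
      have h1 : 0 < σ ^ (rk k + 1) := Real.rpow_pos_of_pos hσ _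
      have h1' : σ ^ (rk k + 1) ≤ 1 := Real.rpow_le_one hσ.le hσ1 (by linarith [hrk k])
      have hle : σ ^ (r + 1) ≤ σ ^ (rk k + 1) :=
        Real.rpow_le_rpow_of_exponent_ge hσ hσ1 (by linarith [hrk2 k])
      have key : σ ^ (r + 1) * (1 / (1 + α k)) ≤ σ ^ (rk k + 1) / (σ ^ (rk k + 1) + α k) := by
        rw [mul_one_div]
        exact div_le_div₀ h1.le hle (by linarith) (by linarith)
      calc 1 - σ ^ (rk k + 1) / (σ ^ (rk k + 1) + α k)
          ≤ Real.exp (-(σ ^ (rk k + 1) / (σ ^ (rk k + 1) + α k))) := by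
            have := Real.add_one_le_exp (-(σ ^ (rk k + 1) / (σ ^ (rk k + 1) + α k)))
            linarith
        _ ≤ Real.exp (-(σ ^ (r + 1) * (1 / (1 + α k)))) :=
            Real.exp_le_exp.mpr (by linarith [key])
  rw [← Real.exp_sum] at hprod
  have hsum : ∑ k ∈ Finset.Icc 1 n, -(σ ^ (r + 1) * (1 / (1 + α k))) = -(σ ^ (r + 1) * S) := by
    rw [hS, Finset.mul_sum, ← Finset.sum_neg_distrib]
  rw [hsum] at hprod
  have ht : 0 < σ ^ (r + 1) * S := by positivity
  have hexp := hCle _ ht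
  have hrpow : (σ ^ (r + 1) * S) ^ (-(ν / (r + 1))) =
      σ ^ (-ν) * S ^ (-(ν / (r + 1))) := by
    rw [Real.mul_rpow hσr1.le hSpos.le, ← Real.rpow_mul hσ.le]
    congr 2
    field_simp
  rw [hrpow] at hexp
  have hσν : 0 < σ ^ ν := Real.rpow_pos_of_pos hσ ν
  calc σ ^ ν * ∏ k ∈ Finset.Icc 1 n, (1 - σ ^ (rk k + 1) / (σ ^ (rk k + 1) + α k))
      ≤ σ ^ ν * Real.exp (-(σ ^ (r + 1) * S)) := by
        apply mul_le_mul_of_nonneg_left hprod hσν.le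
    _ ≤ σ ^ ν * (C * (σ ^ (-ν) * S ^ (-(ν / (r + 1))))) :=
        mul_le_mul_of_nonneg_left hexp hσν.le
    _ = C * (σ ^ ν * σ ^ (-ν)) * S ^ (-(ν / (r + 1))) := by ring
    _ = C * S ^ (-(ν / (r + 1))) := by
        rw [← Real.rpow_add hσ, add_neg_cancel, Real.rpow_zero, mul_one]
end

section
/- Let α_0 ∈ (0, ∞), q ∈ (0, 1), and set α_n = α_0 q^n, α̂_n = 1/n!, r̂_n = n. Then for every fixed σ ∈ (0, 1), the series ∑_{k=1}^∞ (α_k σ^{r̂_k+1} − α̂_k σ²)/(α_k σ^{r̂_k+1} + α_k α̂_k) diverges, since the general term converges to 1 as k → ∞. -/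
open Filter

theorem stmt19 (α₀ q : ℝ) (hα₀ : 0 < α₀) (hq : 0 < q) (hq1 : q < 1) :
    ∀ σ : ℝ, 0 < σ → σ < 1 →
      Tendsto
        (fun k : ℕ =>
          (α₀ * q ^ k * σ ^ (k + 1) - (1 / (k.factorial : ℝ)) * σ ^ 2) /
          (α₀ * q ^ k * σ ^ (k + 1) + α₀ * q ^ k * (1 / (k.factorial : ℝ))))
        atTop (nhds 1) ∧
      ¬ Summable
        (fun k : ℕ =>
          (α₀ * q ^ k * σ ^ (k + 1) - (1 / (k.factorial : ℝ)) * σ ^ 2) /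
          (α₀ * q ^ k * σ ^ (k + 1) + α₀ * q ^ k * (1 / (k.factorial : ℝ)))) := by
  intro σ hσ hσ1
  set c : ℕ → ℝ := fun k => σ / α₀ * ((1 / (q * σ)) ^ k / (k.factorial : ℝ)) with hc
  set d : ℕ → ℝ := fun k => 1 / σ * ((1 / σ) ^ k / (k.factorial : ℝ)) with hd
  have hcd : ∀ k : ℕ,
      (α₀ * q ^ k * σ ^ (k + 1) - (1 / (k.factorial : ℝ)) * σ ^ 2) /
        (α₀ * q ^ k * σ ^ (k + 1) + α₀ * q ^ k * (1 / (k.factorial : ℝ)))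
      = (1 - c k) / (1 + d k) := by
    intro k
    have hfac : (0 : ℝ) < (k.factorial : ℝ) := by positivity
    have hdk : 0 < d k := by
      simp only [hd]; positivity
    have hden1 : α₀ * q ^ k * σ ^ (k + 1) + α₀ * q ^ k * (1 / (k.factorial : ℝ)) > 0 := by
      positivity
    simp only [hc, hd]
    rw [div_eq_div_iff hden1.ne' (by positivity)]
    simp only [one_div, inv_pow, mul_inv]
    field_simp
    have hA : q ^ k * q⁻¹ ^ k = 1 := by rw [← mul_pow, mul_inv_cancel₀ hq.ne', one_pow]
    have hB : σ ^ k * σ⁻¹ ^ k = 1 := by rw [← mul_pow, mul_inv_cancel₀ hσ.ne', one_pow]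
    linear_combination (σ ^ 2 + σ ^ 3 * σ ^ k * (k.factorial : ℝ)) * (σ ^ k * σ⁻¹ ^ k) * hA + (σ ^ 2 + σ ^ 3 * σ ^ k * (k.factorial : ℝ)) * hB
  have hctend : Tendsto c atTop (nhds 0) := by
    have := (FloorSemiring.tendsto_pow_div_factorial_atTop (K := ℝ) (1 / (q * σ))).const_mul
      (σ / α₀)
    simpa only [hc, one_div, mul_inv, mul_zero] using this
  have hdtend : Tendsto d atTop (nhds 0) := by
    have := (FloorSemiring.tendsto_pow_div_factorial_atTop (K := ℝ) (1 / σ)).const_mul (1 / σ)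
    simpa only [hd, one_div, mul_inv, inv_pow, mul_zero] using this
  have htend : Tendsto
      (fun k : ℕ =>
        (α₀ * q ^ k * σ ^ (k + 1) - (1 / (k.factorial : ℝ)) * σ ^ 2) /
        (α₀ * q ^ k * σ ^ (k + 1) + α₀ * q ^ k * (1 / (k.factorial : ℝ))))
      atTop (nhds 1) := by
    have h1 : Tendsto (fun k => (1 - c k) / (1 + d k)) atTop (nhds 1) := by
      have := ((tendsto_const_nhds (x := (1:ℝ)) (f := atTop)).sub hctend).div
        ((tendsto_const_nhds (x := (1:ℝ)) (f := atTop)).add hdtend) (by norm_num)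
      rw [show ((1:ℝ) - 0) / (1 + 0) = 1 by norm_num] at this
      exact this
    exact h1.congr (fun k => (hcd k).symm)
  refine ⟨htend, fun hs => ?_⟩
  have h0 := hs.tendsto_atTop_zero
  have := tendsto_nhds_unique htend h0
  norm_num at this
end
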